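/- Every proper palindromic suffix of a string x is a palindromic suffix of the longest proper palindromic suffix slink(x) of x. -/
import Mathlib

def IsPal {α : Type*} (P : List α) : Prop := P.reverse = P

/-- Every proper palindromic suffix of `x` is a (palindromic) suffix of the
longest proper palindromic suffix `slink(x)` of `x`. -/
theorem proper_palindromic_suffix_of_slink {α : Type*} (x sx P : List α)
    (hsuf : sx <:+ x) (hpal : IsPal sx) (hlt : sx.length < x.length)
    (hmax : ∀ Q : List α, Q <:+ x → IsPal Q → Q.length < x.length →
      Q.length ≤ sx.length)
    (hP : P <:+ x) (hPpal : IsPal P) (hPlt : P.length < x.length) :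
    P <:+ sx := by
  have hle := hmax P hP hPpal hPlt
  have h1 : P.reverse <+: x.reverse := List.reverse_prefix.mpr hP
  have h2 : sx.reverse <+: x.reverse := List.reverse_prefix.mpr hsuf
  have := List.prefix_of_prefix_length_le h1 h2 (by simpa using hle)
  exact List.reverse_prefix.mp this
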